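/- The covariance matrix of the matched-pair estimator satisfies Cov(τ̂_M) = (2^{2(K-1)} r^2)^{-1} Σ_{l=1}^{2^K} λ_l' λ_l Δ_l − (2^K(2^K−1) r^2)^{-1} Σ, where Δ_l = (2^K−1)^{-1}[(N−1) S^2(z_l) − 2^K Σ_{j=1}^r (Ȳ_{j·}(z_l) − Ȳ(z_l))^2] and Σ = Σ_{i=1}^N (τ_i − τ)(τ_i − τ)' − 2^K Σ_{j=1}^r (τ_{j·} − τ)(τ_{j·} − τ)'. -/

import Mathlib

open Matrix Finset

/-- Mean of `f` over a finite type. -/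
noncomputable def mpE {α : Type*} [Fintype α] (f : α → ℝ) : ℝ :=
  (Fintype.card α : ℝ)⁻¹ * ∑ x, f x

lemma mpE_const {α : Type*} [Fintype α] [Nonempty α] (c : ℝ) :
    mpE (fun _ : α => c) = c := by
  have : (Fintype.card α : ℝ) ≠ 0 := by exact_mod_cast Fintype.card_ne_zero
  simp only [mpE, Finset.sum_const, Finset.card_univ, nsmul_eq_mul]
  rw [inv_mul_cancel_left₀ this]

lemma mpE_smul {α : Type*} [Fintype α] (c : ℝ) (f : α → ℝ) :
    mpE (fun x => c * f x) = c * mpE f := by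
  simp only [mpE, Finset.mul_sum]
  exact Finset.sum_congr rfl fun x _ => by ring

lemma mpE_sum {α ι : Type*} [Fintype α] (s : Finset ι) (f : ι → α → ℝ) :
    mpE (fun x => ∑ i ∈ s, f i x) = ∑ i ∈ s, mpE (f i) := by
  simp only [mpE, Finset.mul_sum]
  rw [Finset.sum_comm]

lemma mpE_sub {α : Type*} [Fintype α] (f g : α → ℝ) :
    mpE (fun x => f x - g x) = mpE f - mpE g := by
  simp [mpE, Finset.sum_sub_distrib, mul_sub]

lemma mpE_cov {α : Type*} [Fintype α] [Nonempty α] (f g : α → ℝ) :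
    mpE (fun x => (f x - mpE f) * (g x - mpE g))
      = mpE (fun x => f x * g x) - mpE f * mpE g := by
  have hcard : (Fintype.card α : ℝ) ≠ 0 := by exact_mod_cast Fintype.card_ne_zero
  obtain ⟨p, hp⟩ : ∃ p, mpE f = p := ⟨_, rfl⟩
  obtain ⟨q, hq⟩ : ∃ q, mpE g = q := ⟨_, rfl⟩
  rw [hp, hq]
  unfold mpE at hp hq ⊢
  have hf : ∑ x, f x = (Fintype.card α : ℝ) * p := by rw [← hp]; field_simp
  have hg : ∑ x, g x = (Fintype.card α : ℝ) * q := by rw [← hq]; field_simp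
  have h : ∀ x ∈ (univ : Finset α), (f x - p) * (g x - q)
      = f x * g x - p * g x - q * f x + p * q := fun x _ => by ring
  rw [Finset.sum_congr rfl h]
  simp only [Finset.sum_add_distrib, Finset.sum_sub_distrib, ← Finset.mul_sum,
    Finset.sum_const, Finset.card_univ, nsmul_eq_mul]
  rw [hf, hg]
  field_simp
  ring

/-- Mean of a product over independent coordinates. -/
lemma mpE_pi_prod {ι G : Type*} [Fintype ι] [DecidableEq ι] [Fintype G]
    (f : ι → G → ℝ) :
    mpE (fun π : ι → G => ∏ k, f k (π k)) = ∏ k, mpE (f k) := by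
  unfold mpE
  rw [← Fintype.prod_sum f, Fintype.card_fun]
  rw [Finset.prod_mul_distrib, Finset.prod_const]
  push_cast
  rw [Finset.card_univ, inv_pow]

lemma mpE_pi_eval {ι G : Type*} [Fintype ι] [DecidableEq ι] [Fintype G] [Nonempty G]
    (j : ι) (F : G → ℝ) :
    mpE (fun π : ι → G => F (π j)) = mpE F := by
  have h := mpE_pi_prod (ι := ι) (G := G) (fun k => if k = j then F else fun _ => 1)
  have e1 : ∀ π : ι → G, (∏ k, (if k = j then F else fun _ => (1:ℝ)) (π k)) = F (π j) := by
    intro π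
    rw [Finset.prod_eq_single j]
    · simp
    · intro k _ hk; simp [hk]
    · simp
  have e2 : (∏ k, mpE ((if k = j then F else fun _ => (1:ℝ)) : G → ℝ)) = mpE F := by
    rw [Finset.prod_eq_single j]
    · simp
    · intro k _ hk; simp [hk, mpE_const]
    · simp
  rw [← e2, ← h]
  exact congrArg mpE (funext fun π => (e1 π).symm)

lemma mpE_pi_eval_two {ι G : Type*} [Fintype ι] [DecidableEq ι] [Fintype G] [Nonempty G]
    {j j' : ι} (h : j ≠ j') (F F' : G → ℝ) :
    mpE (fun π : ι → G => F (π j) * F' (π j')) = mpE F * mpE F' := by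
  have h2 := mpE_pi_prod (ι := ι) (G := G)
    (fun k => if k = j then F else if k = j' then F' else fun _ => 1)
  have e1 : ∀ π : ι → G, (∏ k, (if k = j then F else if k = j' then F' else fun _ => 1) (π k))
      = F (π j) * F' (π j') := by
    intro π
    rw [Finset.prod_eq_mul_of_mem j j' (Finset.mem_univ _) (Finset.mem_univ _) h]
    · simp [h, h.symm]
    · intro k _ hk
      simp [hk.1, hk.2]
  have e2 : (∏ k, mpE ((if k = j then F else if k = j' then F' else fun _ => 1) : G → ℝ))
      = mpE F * mpE F' := by
    rw [Finset.prod_eq_mul_of_mem j j' (Finset.mem_univ _) (Finset.mem_univ _) h]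
    · simp [h, h.symm]
    · intro k _ hk
      simp [hk.1, hk.2, mpE_const]
  rw [← e2, ← h2]
  exact congrArg mpE (funext fun π => (e1 π).symm)


/-- There is a permutation sending a pair of distinct points to any other such pair. -/
lemma exists_perm_two {α : Type*} [DecidableEq α] [Fintype α] {a b c d : α}
    (hab : a ≠ b) (hcd : c ≠ d) : ∃ τ : Equiv.Perm α, τ a = c ∧ τ b = d := by
  refine ⟨(Equiv.swap ((Equiv.swap a c) b) d) * (Equiv.swap a c), ?_, ?_⟩
  · have hp : (Equiv.swap a c) b ≠ c := by
      intro h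
      have := (Equiv.swap a c).injective (h.trans (Equiv.swap_apply_left a c).symm)
      exact hab this.symm
    simp only [Equiv.Perm.mul_apply, Equiv.swap_apply_left]
    exact Equiv.swap_apply_of_ne_of_ne (Ne.symm hp) hcd
  · simp [Equiv.Perm.mul_apply, Equiv.swap_apply_left]

lemma mpE_perm_inv {α : Type*} [DecidableEq α] [Fintype α] (f : Equiv.Perm α → ℝ) :
    mpE (fun σ : Equiv.Perm α => f σ⁻¹) = mpE f := by
  unfold mpE
  congr 1
  exact Fintype.sum_equiv (Equiv.inv (Equiv.Perm α)) _ _ (fun σ => rfl)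

lemma card_fiber_one {α : Type*} [DecidableEq α] [Fintype α] (l i : α) :
    #(univ.filter fun σ : Equiv.Perm α => σ l = i)
      = #(univ.filter fun σ : Equiv.Perm α => σ l = l) := by
  apply Finset.card_bij' (fun σ _ => (Equiv.swap i l) * σ) (fun σ _ => (Equiv.swap i l) * σ)
  · intro σ hσ
    simp only [Finset.mem_filter, Finset.mem_univ, true_and] at hσ ⊢
    simp [Equiv.Perm.mul_apply, hσ, Equiv.swap_apply_left]
  · intro σ hσ
    simp only [Finset.mem_filter, Finset.mem_univ, true_and] at hσ ⊢
    simp [Equiv.Perm.mul_apply, hσ, Equiv.swap_apply_right]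
  · intro σ _; ext x; simp [Equiv.Perm.mul_apply]
  · intro σ _; ext x; simp [Equiv.Perm.mul_apply]

lemma mpE_perm_one {α : Type*} [DecidableEq α] [Fintype α] [Nonempty α] (l : α) (f : α → ℝ) :
    mpE (fun σ : Equiv.Perm α => f (σ l)) = (Fintype.card α : ℝ)⁻¹ * ∑ i, f i := by
  classical
  set C := #(univ.filter fun σ : Equiv.Perm α => σ l = l) with hC
  have hcard : Fintype.card (Equiv.Perm α) = Fintype.card α * C := by
    rw [← Finset.card_univ,
      Finset.card_eq_sum_card_fiberwise (f := fun σ : Equiv.Perm α => σ l)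
        (t := univ) (fun σ _ => mem_univ _)]
    have h1 : ∀ b : α, #(univ.filter fun σ : Equiv.Perm α => σ l = b) = C :=
      fun b => card_fiber_one l b
    simp [h1, Finset.sum_const, Finset.card_univ]
  have hsum : ∑ σ : Equiv.Perm α, f (σ l) = ∑ i, (C : ℝ) * f i := by
    rw [← Finset.sum_fiberwise_of_maps_to (g := fun σ : Equiv.Perm α => σ l)
      (t := univ) (fun σ _ => mem_univ _)]
    refine Finset.sum_congr rfl fun i _ => ?_
    have h2 : ∀ σ ∈ univ.filter (fun σ : Equiv.Perm α => σ l = i), f (σ l) = f i := by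
      intro σ hσ
      simp only [Finset.mem_filter] at hσ
      rw [hσ.2]
    rw [Finset.sum_congr rfl h2, Finset.sum_const, card_fiber_one l i, nsmul_eq_mul]
  have hCpos : 0 < C := Finset.card_pos.mpr ⟨1, by simp⟩
  have hC0 : (C : ℝ) ≠ 0 := by positivity
  have hn0 : (Fintype.card α : ℝ) ≠ 0 := by
    have := Fintype.card_pos (α := α); positivity
  unfold mpE
  rw [hsum, hcard, ← Finset.mul_sum]
  push_cast
  field_simp

lemma card_fiber_two {α : Type*} [DecidableEq α] [Fintype α] {l m : α} (hlm : l ≠ m)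
    (p : α × α) (hp : p.1 ≠ p.2) :
    #(univ.filter fun σ : Equiv.Perm α => (σ l, σ m) = p)
      = #(univ.filter fun σ : Equiv.Perm α => (σ l, σ m) = (l, m)) := by
  obtain ⟨τ, hτ1, hτ2⟩ := exists_perm_two hp hlm
  apply Finset.card_bij' (fun σ _ => τ * σ) (fun σ _ => τ⁻¹ * σ)
  · intro σ hσ
    simp only [Finset.mem_filter, Finset.mem_univ, true_and, Prod.mk.injEq] at hσ ⊢
    rw [Prod.ext_iff] at hσ
    simp only at hσ
    constructor
    · rw [Equiv.Perm.mul_apply, hσ.1, hτ1]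
    · rw [Equiv.Perm.mul_apply, hσ.2, hτ2]
  · intro σ hσ
    simp only [Finset.mem_filter, Finset.mem_univ, true_and, Prod.mk.injEq] at hσ ⊢
    rw [Prod.ext_iff]
    simp only
    constructor
    · rw [Equiv.Perm.mul_apply, hσ.1, ← hτ1]; simp
    · rw [Equiv.Perm.mul_apply, hσ.2, ← hτ2]; simp
  · intro σ _; ext x; simp [Equiv.Perm.mul_apply]
  · intro σ _; ext x; simp [Equiv.Perm.mul_apply]

lemma mpE_perm_two {α : Type*} [DecidableEq α] [Fintype α] {l m : α} (hlm : l ≠ m)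
    (f g : α → ℝ) :
    mpE (fun σ : Equiv.Perm α => f (σ l) * g (σ m))
      = ((Fintype.card α : ℝ) * ((Fintype.card α : ℝ) - 1))⁻¹ *
          ((∑ i, f i) * (∑ i, g i) - ∑ i, f i * g i) := by
  classical
  have hnt : Nontrivial α := ⟨l, m, hlm⟩
  set n := Fintype.card α with hn
  have hn2 : 2 ≤ n := Fintype.one_lt_card
  set C := #(univ.filter fun σ : Equiv.Perm α => (σ l, σ m) = (l, m)) with hCdef
  have h_empty : ∀ p : α × α, p.1 = p.2 →
      (univ.filter fun σ : Equiv.Perm α => (σ l, σ m) = p) = ∅ := by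
    intro p hp
    rw [Finset.filter_eq_empty_iff]
    intro σ _
    intro h
    rw [Prod.ext_iff] at h
    simp only at h
    exact hlm (σ.injective (by rw [h.1, h.2, hp]))
  have hfib : ∀ p ∈ (univ : Finset α).offDiag,
      #(univ.filter fun σ : Equiv.Perm α => (σ l, σ m) = p) = C := by
    intro p hp
    rw [Finset.mem_offDiag] at hp
    exact card_fiber_two hlm p hp.2.2
  have hcard : Fintype.card (Equiv.Perm α) = #((univ : Finset α).offDiag) * C := by
    rw [← Finset.card_univ,
      Finset.card_eq_sum_card_fiberwise (f := fun σ : Equiv.Perm α => (σ l, σ m))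
        (t := univ) (fun σ _ => mem_univ _)]
    rw [← Finset.sum_subset (Finset.subset_univ ((univ : Finset α).offDiag))]
    · rw [Finset.sum_congr rfl hfib, Finset.sum_const, smul_eq_mul]
    · intro p _ hp
      rw [Finset.mem_offDiag] at hp
      push_neg at hp
      rw [h_empty p (hp (mem_univ _) (mem_univ _)), Finset.card_empty]
  have hsum : ∑ σ : Equiv.Perm α, f (σ l) * g (σ m)
      = (C : ℝ) * ∑ p ∈ (univ : Finset α).offDiag, f p.1 * g p.2 := by
    rw [← Finset.sum_fiberwise_of_maps_to (g := fun σ : Equiv.Perm α => (σ l, σ m))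
      (t := univ) (fun σ _ => mem_univ _)]
    rw [← Finset.sum_subset (Finset.subset_univ ((univ : Finset α).offDiag))]
    · rw [Finset.mul_sum]
      refine Finset.sum_congr rfl fun p hp => ?_
      have h2 : ∀ σ ∈ univ.filter (fun σ : Equiv.Perm α => (σ l, σ m) = p),
          f (σ l) * g (σ m) = f p.1 * g p.2 := by
        intro σ hσ
        simp only [Finset.mem_filter, Prod.ext_iff] at hσ
        rw [hσ.2.1, hσ.2.2]
      rw [Finset.sum_congr rfl h2, Finset.sum_const, hfib p hp, nsmul_eq_mul]
    · intro p _ hp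
      rw [Finset.mem_offDiag] at hp
      push_neg at hp
      rw [h_empty p (hp (mem_univ _) (mem_univ _)), Finset.sum_empty]
  have hoff : ∑ p ∈ (univ : Finset α).offDiag, f p.1 * g p.2
      = (∑ i, f i) * (∑ i, g i) - ∑ i, f i * g i := by
    have h1 : ∑ p ∈ (univ : Finset α).diag ∪ (univ : Finset α).offDiag, f p.1 * g p.2
        = (∑ i, f i) * (∑ i, g i) := by
      rw [Finset.diag_union_offDiag, Finset.sum_product, Finset.sum_mul_sum]
    rw [Finset.sum_union (Finset.disjoint_diag_offDiag _)] at h1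
    have h2 : ∑ p ∈ (univ : Finset α).diag, f p.1 * g p.2 = ∑ i, f i * g i := by
      rw [Finset.sum_diag]
    linarith
  have hCpos : 0 < C := Finset.card_pos.mpr ⟨1, by simp⟩
  have hC0 : (C : ℝ) ≠ 0 := by positivity
  have hoffcard : (#((univ : Finset α).offDiag) : ℝ) = (n : ℝ) * ((n : ℝ) - 1) := by
    rw [Finset.offDiag_card, Finset.card_univ, ← hn]
    have : n ≤ n * n := Nat.le_mul_of_pos_left n (by omega)
    push_cast [Nat.cast_sub this]
    ring
  have hn0 : (n : ℝ) ≠ 0 := by positivity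
  have hn1 : (n : ℝ) - 1 ≠ 0 := by
    have : (2 : ℝ) ≤ (n : ℝ) := by exact_mod_cast hn2
    linarith
  unfold mpE
  rw [hsum, hcard, hoff]
  push_cast [hoffcard]
  field_simp

/-- The basic contrast column `h_k` (for factor `l+1`): its `i`-th entry is `+1`
or `-1` according to the corresponding binary digit of `i`, following the block
construction (first `2^(K-k)` entries `-1`, next `2^(K-k)` entries `+1`, repeated). -/
noncomputable def hcol (K : ℕ) (l : Fin K) (i : Fin (2 ^ K)) : ℝ :=
  if Nat.testBit i.val (K - 1 - l.val) then 1 else -1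

/-- The model matrix `H_K` of a `2^K` factorial design, with columns indexed by
subsets `σ ⊆ {1,…,K}`: the column for `σ` is the entrywise product `∏_{l ∈ σ} h_l`,
with the empty set giving the all-ones column `h_0`. -/
noncomputable def Hmat (K : ℕ) : Matrix (Fin (2 ^ K)) (Finset (Fin K)) ℝ :=
  Matrix.of fun i σ => ∏ l ∈ σ, hcol K l i

section MatchedPair

variable (K r : ℕ) (Y : Fin r → Fin (2 ^ K) → Fin (2 ^ K) → ℝ)

/-- Within-pair estimator `τ̂ⱼ.` of pair `j` under the assignment profile `π`. -/
noncomputable def tauhatJ (π : Fin r → Equiv.Perm (Fin (2 ^ K))) (j : Fin r) :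
    Finset (Fin K) → ℝ :=
  ((2 : ℝ) ^ (K - 1))⁻¹ • (Hmat K)ᵀ.mulVec (fun l => Y j ((π j).symm l) l)

/-- Matched-pair estimator `τ̂_M = (1/r) ∑ⱼ τ̂ⱼ.`. -/
noncomputable def tauhatM (π : Fin r → Equiv.Perm (Fin (2 ^ K))) :
    Finset (Fin K) → ℝ :=
  (r : ℝ)⁻¹ • ∑ j, tauhatJ K r Y π j

/-- Individual factorial effect `τᵢ` of unit `i` in pair `j`. -/
noncomputable def tauI (j : Fin r) (i : Fin (2 ^ K)) : Finset (Fin K) → ℝ :=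
  ((2 : ℝ) ^ (K - 1))⁻¹ • (Hmat K)ᵀ.mulVec (Y j i)

/-- Pair-level factorial effect `τⱼ.`. -/
noncomputable def tauJ (j : Fin r) : Finset (Fin K) → ℝ :=
  ((2 : ℝ) ^ K)⁻¹ • ∑ i, tauI K r Y j i

/-- Population factorial effect `τ`. -/
noncomputable def tauPop : Finset (Fin K) → ℝ :=
  (r : ℝ)⁻¹ • ∑ j, tauJ K r Y j

/-- Pair-level average potential outcome `Ȳⱼ.(zₗ)`. -/
noncomputable def YbarJ (j : Fin r) (l : Fin (2 ^ K)) : ℝ :=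
  ((2 : ℝ) ^ K)⁻¹ * ∑ i, Y j i l

/-- Population average potential outcome `Ȳ(zₗ)`, with `N = 2^K r`. -/
noncomputable def YbarAll (l : Fin (2 ^ K)) : ℝ :=
  ((2 ^ K * r : ℕ) : ℝ)⁻¹ * ∑ j, ∑ i, Y j i l

/-- Population variance `S²(zₗ) = (N−1)⁻¹ ∑ᵢ (Yᵢ(zₗ) − Ȳ(zₗ))²`. -/
noncomputable def S2 (l : Fin (2 ^ K)) : ℝ :=
  (((2 ^ K * r : ℕ) : ℝ) - 1)⁻¹ * ∑ j, ∑ i, (Y j i l - YbarAll K r Y l) ^ 2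

/-- `Δₗ = (2^K−1)⁻¹ [(N−1) S²(zₗ) − 2^K ∑ⱼ (Ȳⱼ.(zₗ) − Ȳ(zₗ))²]`. -/
noncomputable def Delta (l : Fin (2 ^ K)) : ℝ :=
  ((2 : ℝ) ^ K - 1)⁻¹ *
    ((((2 ^ K * r : ℕ) : ℝ) - 1) * S2 K r Y l -
      (2 : ℝ) ^ K * ∑ j, (YbarJ K r Y j l - YbarAll K r Y l) ^ 2)

/-- `Σ = ∑ᵢ (τᵢ−τ)(τᵢ−τ)' − 2^K ∑ⱼ (τⱼ.−τ)(τⱼ.−τ)'`. -/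
noncomputable def SigmaMat : Matrix (Finset (Fin K)) (Finset (Fin K)) ℝ :=
  (∑ j, ∑ i, vecMulVec (tauI K r Y j i - tauPop K r Y) (tauI K r Y j i - tauPop K r Y))
    - (2 : ℝ) ^ K •
        ∑ j, vecMulVec (tauJ K r Y j - tauPop K r Y) (tauJ K r Y j - tauPop K r Y)

/-- Mean (over the independent uniformly random within-pair bijections) of a
component of `τ̂_M`. -/
noncomputable def tauhatMMean (a : Finset (Fin K)) : ℝ :=
  (Fintype.card (Fin r → Equiv.Perm (Fin (2 ^ K))) : ℝ)⁻¹ * ∑ π, tauhatM K r Y π a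


/-! ### Design-specific auxiliary definitions and lemmas -/

noncomputable def mpT (j : Fin r) (σ : Equiv.Perm (Fin (2 ^ K))) (a : Finset (Fin K)) : ℝ :=
  ((2 : ℝ) ^ (K - 1))⁻¹ * ∑ l, Hmat K l a * Y j (σ⁻¹ l) l

noncomputable def mpMu (j : Fin r) (a : Finset (Fin K)) : ℝ :=
  mpE (fun σ : Equiv.Perm (Fin (2 ^ K)) => mpT K r Y j σ a)

noncomputable def mpW (j : Fin r) (l m : Fin (2 ^ K)) : ℝ :=
  ∑ i, (Y j i l - YbarJ K r Y j l) * (Y j i m - YbarJ K r Y j m)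

lemma nonempty_fin_pow : Nonempty (Fin (2 ^ K)) :=
  Fin.pos_iff_nonempty.mp (by positivity)

lemma card_fin_pow : ((Fintype.card (Fin (2 ^ K)) : ℕ) : ℝ) = (2:ℝ) ^ K := by
  rw [Fintype.card_fin]; push_cast; ring

lemma sum_shift_mul (f g : Fin (2 ^ K) → ℝ) (c d : ℝ) :
    ∑ i, (f i - c) * (g i - d)
      = ∑ i, f i * g i - c * ∑ i, g i - d * ∑ i, f i + (2:ℝ) ^ K * (c * d) := by
  have h : ∀ i ∈ (univ : Finset (Fin (2 ^ K))),
      (f i - c) * (g i - d) = f i * g i - c * g i - d * f i + c * d := fun i _ => by ring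
  rw [Finset.sum_congr rfl h]
  simp only [Finset.sum_add_distrib, Finset.sum_sub_distrib, ← Finset.mul_sum,
    Finset.sum_const, Finset.card_univ, Fintype.card_fin, nsmul_eq_mul]
  push_cast
  ring

lemma sum_Y_eq (j : Fin r) (l : Fin (2 ^ K)) :
    ∑ i, Y j i l = (2:ℝ) ^ K * YbarJ K r Y j l := by
  unfold YbarJ
  rw [← mul_assoc, mul_inv_cancel₀ (by positivity : ((2:ℝ)^K) ≠ 0), one_mul]

lemma mpW_eq (j : Fin r) (l m : Fin (2 ^ K)) :
    mpW K r Y j l m = ∑ i, Y j i l * Y j i m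
      - ((2:ℝ) ^ K)⁻¹ * ((∑ i, Y j i l) * (∑ i, Y j i m)) := by
  unfold mpW
  rw [sum_shift_mul, sum_Y_eq, sum_Y_eq]
  field_simp
  ring

lemma tauhatJ_eq (π : Fin r → Equiv.Perm (Fin (2 ^ K))) (j : Fin r) (a : Finset (Fin K)) :
    tauhatJ K r Y π j a = mpT K r Y j (π j) a := by
  unfold tauhatJ mpT
  simp only [Pi.smul_apply, smul_eq_mul, Matrix.mulVec, Matrix.transpose_apply,
    dotProduct]
  rfl

lemma mpMu_eq (j : Fin r) (a : Finset (Fin K)) :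
    mpMu K r Y j a = ((2 : ℝ) ^ (K - 1))⁻¹ * ∑ l, Hmat K l a * YbarJ K r Y j l := by
  haveI := nonempty_fin_pow K
  unfold mpMu mpT
  rw [mpE_smul, mpE_sum univ (fun l (σ : Equiv.Perm (Fin (2^K))) => Hmat K l a * Y j (σ⁻¹ l) l)]
  congr 1
  refine Finset.sum_congr rfl fun l _ => ?_
  rw [mpE_smul, mpE_perm_inv (fun σ => Y j (σ l) l), mpE_perm_one l (fun i => Y j i l)]
  rw [card_fin_pow]
  rfl

lemma tauI_apply (j : Fin r) (i : Fin (2 ^ K)) (a : Finset (Fin K)) :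
    tauI K r Y j i a = ((2 : ℝ) ^ (K - 1))⁻¹ * ∑ l, Hmat K l a * Y j i l := by
  unfold tauI
  simp only [Pi.smul_apply, smul_eq_mul, Matrix.mulVec, Matrix.transpose_apply,
    dotProduct]

lemma tauJ_apply (j : Fin r) (a : Finset (Fin K)) :
    tauJ K r Y j a = ((2 : ℝ) ^ (K - 1))⁻¹ * ∑ l, Hmat K l a * YbarJ K r Y j l := by
  unfold tauJ YbarJ
  simp only [Pi.smul_apply, smul_eq_mul, Finset.sum_apply]
  rw [Finset.sum_congr rfl fun i _ => tauI_apply K r Y j i a]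
  simp only [Finset.mul_sum]
  rw [Finset.sum_comm]
  exact Finset.sum_congr rfl fun l _ => Finset.sum_congr rfl fun i _ => by ring

lemma YbarAll_eq (hr : 0 < r) (l : Fin (2 ^ K)) :
    YbarAll K r Y l = (r : ℝ)⁻¹ * ∑ j, YbarJ K r Y j l := by
  unfold YbarAll YbarJ
  have h2 : ((2:ℝ)^K) ≠ 0 := by positivity
  have hr0 : (r : ℝ) ≠ 0 := by exact_mod_cast hr.ne'
  push_cast
  rw [Finset.mul_sum, Finset.mul_sum]
  field_simp

lemma tauPop_apply (hr : 0 < r) (a : Finset (Fin K)) :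
    tauPop K r Y a = ((2 : ℝ) ^ (K - 1))⁻¹ * ∑ l, Hmat K l a * YbarAll K r Y l := by
  unfold tauPop
  simp only [Pi.smul_apply, smul_eq_mul, Finset.sum_apply]
  rw [Finset.sum_congr rfl fun j _ => tauJ_apply K r Y j a]
  rw [Finset.sum_congr rfl fun l (_ : l ∈ univ) =>
    congrArg (Hmat K l a * ·) (YbarAll_eq K r Y hr l)]
  simp only [Finset.mul_sum]
  rw [Finset.sum_comm]
  exact Finset.sum_congr rfl fun l _ => Finset.sum_congr rfl fun j2 _ => by ring

lemma hprod_lemma (a b : Finset (Fin K)) (u v : Fin (2 ^ K) → ℝ) :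
    (((2 : ℝ) ^ (K - 1))⁻¹ * ∑ l, Hmat K l a * u l) *
        (((2 : ℝ) ^ (K - 1))⁻¹ * ∑ m, Hmat K m b * v m)
      = (((2 : ℝ) ^ (K - 1))⁻¹) ^ 2 *
          ∑ l, ∑ m, Hmat K l a * Hmat K m b * (u l * v m) := by
  rw [mul_mul_mul_comm, Finset.sum_mul_sum, ← pow_two]
  congr 1
  exact Finset.sum_congr rfl fun l _ => Finset.sum_congr rfl fun m _ => by ring

lemma cov_pair (hK : 0 < K) (j : Fin r) (a b : Finset (Fin K)) :
    mpE (fun σ : Equiv.Perm (Fin (2 ^ K)) =>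
        (mpT K r Y j σ a - mpMu K r Y j a) * (mpT K r Y j σ b - mpMu K r Y j b))
      = (((2 : ℝ) ^ (K - 1))⁻¹) ^ 2 *
          (((2:ℝ) ^ K - 1)⁻¹ * ∑ l, Hmat K l a * Hmat K l b * mpW K r Y j l l
            - ((2:ℝ) ^ K * ((2:ℝ) ^ K - 1))⁻¹ *
                ∑ l, ∑ m, Hmat K l a * Hmat K m b * mpW K r Y j l m) := by
  haveI := nonempty_fin_pow K
  set c : ℝ := ((2 : ℝ) ^ (K - 1))⁻¹ with hc
  set n : ℝ := (2:ℝ) ^ K with hn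
  have hn0 : n ≠ 0 := by rw [hn]; positivity
  have hn1 : n - 1 ≠ 0 := by
    have : (2:ℝ) ≤ n := by
      rw [hn]
      calc (2:ℝ) = 2 ^ 1 := (pow_one 2).symm
      _ ≤ 2 ^ K := by apply pow_le_pow_right₀ (by norm_num) hK
    linarith
  -- the expected value of the single off/on-diagonal products
  have hEv : ∀ l m : Fin (2 ^ K),
      mpE (fun σ : Equiv.Perm (Fin (2 ^ K)) => Y j (σ⁻¹ l) l * Y j (σ⁻¹ m) m)
        = (if l = m then n⁻¹ * ∑ i, Y j i l * Y j i m
            else (n * (n - 1))⁻¹ *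
              ((∑ i, Y j i l) * (∑ i, Y j i m) - ∑ i, Y j i l * Y j i m)) := by
    intro l m
    have h1 : mpE (fun σ : Equiv.Perm (Fin (2 ^ K)) => Y j (σ⁻¹ l) l * Y j (σ⁻¹ m) m)
        = mpE (fun σ : Equiv.Perm (Fin (2 ^ K)) => Y j (σ l) l * Y j (σ m) m) :=
      mpE_perm_inv (fun σ => Y j (σ l) l * Y j (σ m) m)
    rw [h1]
    by_cases hlm : l = m
    · subst hlm
      rw [if_pos rfl]
      have h2 : mpE (fun σ : Equiv.Perm (Fin (2 ^ K)) => Y j (σ l) l * Y j (σ l) l)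
          = ((Fintype.card (Fin (2 ^ K)) : ℝ))⁻¹ * ∑ i, Y j i l * Y j i l :=
        mpE_perm_one l (fun i => Y j i l * Y j i l)
      rw [h2, card_fin_pow]
    · rw [if_neg hlm]
      have h2 := mpE_perm_two (α := Fin (2 ^ K)) hlm (fun i => Y j i l) (fun i => Y j i m)
      rw [h2, card_fin_pow]
  -- second moment
  have e1 : ∀ σ : Equiv.Perm (Fin (2 ^ K)), mpT K r Y j σ a * mpT K r Y j σ b
      = c ^ 2 * ∑ l, ∑ m, Hmat K l a * Hmat K m b *
          (Y j (σ⁻¹ l) l * Y j (σ⁻¹ m) m) := fun σ =>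
    hprod_lemma K a b (fun l => Y j (σ⁻¹ l) l) (fun m => Y j (σ⁻¹ m) m)
  have hsm : mpE (fun σ : Equiv.Perm (Fin (2 ^ K)) => mpT K r Y j σ a * mpT K r Y j σ b)
      = c ^ 2 * ∑ l, ∑ m, Hmat K l a * Hmat K m b *
          (if l = m then n⁻¹ * ∑ i, Y j i l * Y j i m
            else (n * (n - 1))⁻¹ *
              ((∑ i, Y j i l) * (∑ i, Y j i m) - ∑ i, Y j i l * Y j i m)) := by
    rw [congrArg mpE (funext e1), mpE_smul]
    congr 1
    rw [mpE_sum]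
    refine Finset.sum_congr rfl fun l _ => ?_
    rw [mpE_sum]
    refine Finset.sum_congr rfl fun m _ => ?_
    rw [mpE_smul, hEv l m]
  -- mean product
  have hmu : mpMu K r Y j a * mpMu K r Y j b
      = c ^ 2 * ∑ l, ∑ m, Hmat K l a * Hmat K m b *
          (YbarJ K r Y j l * YbarJ K r Y j m) := by
    rw [mpMu_eq, mpMu_eq]
    exact hprod_lemma K a b (fun l => YbarJ K r Y j l) (fun m => YbarJ K r Y j m)
  have hcov := mpE_cov (fun σ : Equiv.Perm (Fin (2 ^ K)) => mpT K r Y j σ a)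
    (fun σ : Equiv.Perm (Fin (2 ^ K)) => mpT K r Y j σ b)
  have hmua : mpMu K r Y j a = mpE (fun σ : Equiv.Perm (Fin (2 ^ K)) => mpT K r Y j σ a) := rfl
  have hmub : mpMu K r Y j b = mpE (fun σ : Equiv.Perm (Fin (2 ^ K)) => mpT K r Y j σ b) := rfl
  rw [hmua, hmub, hcov, ← hmua, ← hmub, hsm, hmu, ← mul_sub]
  congr 1
  rw [← Finset.sum_sub_distrib]
  rw [Finset.mul_sum, Finset.mul_sum, ← Finset.sum_sub_distrib]
  refine Finset.sum_congr rfl fun l _ => ?_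
  rw [← Finset.sum_sub_distrib]
  have hrhs : (n - 1)⁻¹ * (Hmat K l a * Hmat K l b * mpW K r Y j l l)
      = ∑ m, (if m = l then (n - 1)⁻¹ * (Hmat K l a * Hmat K m b * mpW K r Y j l m) else 0) := by
    rw [Finset.sum_ite_eq' univ l
      (fun m => (n - 1)⁻¹ * (Hmat K l a * Hmat K m b * mpW K r Y j l m))]
    simp
  rw [hrhs, Finset.mul_sum, ← Finset.sum_sub_distrib]
  refine Finset.sum_congr rfl fun m _ => ?_
  -- pointwise identity
  rw [mpW_eq]
  by_cases hlm : l = m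
  · subst hlm
    rw [if_pos rfl, if_pos rfl, sum_Y_eq K r Y j l, ← hn]
    field_simp
  · rw [if_neg hlm, if_neg (fun h => hlm h.symm), sum_Y_eq K r Y j l, sum_Y_eq K r Y j m,
      ← hn]
    field_simp
    ring

lemma lhs_entry (a b : Finset (Fin K)) :
    (Fintype.card (Fin r → Equiv.Perm (Fin (2 ^ K))) : ℝ)⁻¹ *
        ∑ π, (tauhatM K r Y π a - tauhatMMean K r Y a) *
             (tauhatM K r Y π b - tauhatMMean K r Y b)
      = ((r : ℝ)⁻¹) ^ 2 * ∑ j, mpE (fun σ : Equiv.Perm (Fin (2 ^ K)) =>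
          (mpT K r Y j σ a - mpMu K r Y j a) * (mpT K r Y j σ b - mpMu K r Y j b)) := by
  haveI : Nonempty (Equiv.Perm (Fin (2 ^ K))) := ⟨1⟩
  have htM : ∀ (π : Fin r → Equiv.Perm (Fin (2 ^ K))) (e : Finset (Fin K)),
      tauhatM K r Y π e = (r : ℝ)⁻¹ * ∑ j, mpT K r Y j (π j) e := by
    intro π e
    unfold tauhatM
    simp only [Pi.smul_apply, smul_eq_mul, Finset.sum_apply]
    congr 1
  have hMean : ∀ e : Finset (Fin K),
      tauhatMMean K r Y e = (r : ℝ)⁻¹ * ∑ j, mpMu K r Y j e := by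
    intro e
    have h0 : tauhatMMean K r Y e
        = mpE (fun π : Fin r → Equiv.Perm (Fin (2 ^ K)) => tauhatM K r Y π e) := rfl
    rw [h0, congrArg mpE (funext fun π => htM π e), mpE_smul, mpE_sum]
    congr 1
    exact Finset.sum_congr rfl fun j _ =>
      mpE_pi_eval j (fun σ : Equiv.Perm (Fin (2 ^ K)) => mpT K r Y j σ e)
  have hD0 : ∀ (j : Fin r) (e : Finset (Fin K)),
      mpE (fun σ : Equiv.Perm (Fin (2 ^ K)) => mpT K r Y j σ e - mpMu K r Y j e) = 0 := by
    intro j e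
    rw [mpE_sub (fun σ : Equiv.Perm (Fin (2 ^ K)) => mpT K r Y j σ e)
      (fun _ => mpMu K r Y j e), mpE_const, sub_eq_zero]
    rfl
  have hmain : mpE (fun π : Fin r → Equiv.Perm (Fin (2 ^ K)) =>
      (tauhatM K r Y π a - tauhatMMean K r Y a) * (tauhatM K r Y π b - tauhatMMean K r Y b))
      = ((r : ℝ)⁻¹) ^ 2 * ∑ j, mpE (fun σ : Equiv.Perm (Fin (2 ^ K)) =>
          (mpT K r Y j σ a - mpMu K r Y j a) * (mpT K r Y j σ b - mpMu K r Y j b)) := by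
    have e1 : ∀ π : Fin r → Equiv.Perm (Fin (2 ^ K)),
        (tauhatM K r Y π a - tauhatMMean K r Y a) * (tauhatM K r Y π b - tauhatMMean K r Y b)
          = ((r : ℝ)⁻¹) ^ 2 * ∑ j, ∑ j',
              (mpT K r Y j (π j) a - mpMu K r Y j a) *
                (mpT K r Y j' (π j') b - mpMu K r Y j' b) := by
      intro π
      rw [htM π a, htM π b, hMean a, hMean b, ← mul_sub, ← mul_sub,
        ← Finset.sum_sub_distrib, ← Finset.sum_sub_distrib, mul_mul_mul_comm,
        Finset.sum_mul_sum, ← pow_two]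
    rw [congrArg mpE (funext e1), mpE_smul]
    congr 1
    rw [mpE_sum]
    refine Finset.sum_congr rfl fun j _ => ?_
    rw [mpE_sum]
    rw [Finset.sum_eq_single j]
    · exact mpE_pi_eval j (fun σ : Equiv.Perm (Fin (2 ^ K)) =>
        (mpT K r Y j σ a - mpMu K r Y j a) * (mpT K r Y j σ b - mpMu K r Y j b))
    · intro j' _ hj'
      have h2 := mpE_pi_eval_two (G := Equiv.Perm (Fin (2 ^ K))) (Ne.symm hj')
        (fun σ => mpT K r Y j σ a - mpMu K r Y j a)
        (fun σ => mpT K r Y j' σ b - mpMu K r Y j' b)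
      rw [h2, hD0 j a, zero_mul]
    · intro h; exact absurd (Finset.mem_univ j) h
  exact hmain

lemma key_shift (j : Fin r) (l m : Fin (2 ^ K)) :
    ∑ i, (Y j i l - YbarAll K r Y l) * (Y j i m - YbarAll K r Y m)
        - (2:ℝ) ^ K * ((YbarJ K r Y j l - YbarAll K r Y l) * (YbarJ K r Y j m - YbarAll K r Y m))
      = mpW K r Y j l m := by
  rw [sum_shift_mul, sum_Y_eq, sum_Y_eq, mpW_eq, sum_Y_eq, sum_Y_eq]
  have h2K : ((2:ℝ) ^ K) ≠ 0 := by positivity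
  field_simp
  ring

lemma delta_eq (hK : 0 < K) (hr : 0 < r) (l : Fin (2 ^ K)) :
    Delta K r Y l = ((2:ℝ) ^ K - 1)⁻¹ * ∑ j, mpW K r Y j l l := by
  have hN : (((2 ^ K * r : ℕ) : ℝ)) - 1 ≠ 0 := by
    have h1 : (2:ℕ) ≤ 2 ^ K * r := by
      have h2 : 2 ≤ 2 ^ K := by
        calc 2 = 2 ^ 1 := (pow_one 2).symm
        _ ≤ 2 ^ K := Nat.pow_le_pow_right (by norm_num) hK
      calc (2:ℕ) = 2 * 1 := (mul_one 2).symm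
      _ ≤ 2 ^ K * r := Nat.mul_le_mul h2 hr
    have : (2:ℝ) ≤ ((2 ^ K * r : ℕ) : ℝ) := by exact_mod_cast h1
    linarith
  unfold Delta S2
  rw [mul_inv_cancel_left₀ hN]
  congr 1
  rw [Finset.mul_sum, ← Finset.sum_sub_distrib]
  refine Finset.sum_congr rfl fun j _ => ?_
  have e1 : ∑ i, (Y j i l - YbarAll K r Y l) ^ 2
      = ∑ i, (Y j i l - YbarAll K r Y l) * (Y j i l - YbarAll K r Y l) :=
    Finset.sum_congr rfl fun i _ => sq (Y j i l - YbarAll K r Y l)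
  rw [e1, ← key_shift K r Y j l l]
  ring

lemma swap3 (F : Fin (2 ^ K) → Fin (2 ^ K) → Fin (2 ^ K) → ℝ) :
    ∑ i, ∑ l, ∑ m, F i l m = ∑ l, ∑ m, ∑ i, F i l m := by
  rw [Finset.sum_comm]
  exact Finset.sum_congr rfl fun l _ => Finset.sum_comm

lemma sigma_eq (hr : 0 < r) (a b : Finset (Fin K)) :
    SigmaMat K r Y a b = (((2 : ℝ) ^ (K - 1))⁻¹) ^ 2 *
        ∑ j, ∑ l, ∑ m, Hmat K l a * Hmat K m b * mpW K r Y j l m := by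
  set c : ℝ := ((2 : ℝ) ^ (K - 1))⁻¹ with hc
  have diffI : ∀ (j : Fin r) (i : Fin (2 ^ K)) (e : Finset (Fin K)),
      tauI K r Y j i e - tauPop K r Y e
        = c * ∑ l, Hmat K l e * (Y j i l - YbarAll K r Y l) := by
    intro j i e
    rw [tauI_apply, tauPop_apply K r Y hr, ← mul_sub, ← Finset.sum_sub_distrib]
    congr 1
    exact Finset.sum_congr rfl fun l _ => by ring
  have diffJ : ∀ (j : Fin r) (e : Finset (Fin K)),
      tauJ K r Y j e - tauPop K r Y e
        = c * ∑ l, Hmat K l e * (YbarJ K r Y j l - YbarAll K r Y l) := by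
    intro j e
    rw [tauJ_apply, tauPop_apply K r Y hr, ← mul_sub, ← Finset.sum_sub_distrib]
    congr 1
    exact Finset.sum_congr rfl fun l _ => by ring
  have hprod : ∀ (u v : Fin (2 ^ K) → ℝ),
      (c * ∑ l, Hmat K l a * u l) * (c * ∑ m, Hmat K m b * v m)
        = c ^ 2 * ∑ l, ∑ m, Hmat K l a * Hmat K m b * (u l * v m) := by
    intro u v
    rw [mul_mul_mul_comm, Finset.sum_mul_sum, ← pow_two]
    congr 1
    exact Finset.sum_congr rfl fun l _ => Finset.sum_congr rfl fun m _ => by ring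
  have step1 : SigmaMat K r Y a b
      = ∑ j, ((∑ i, (tauI K r Y j i a - tauPop K r Y a) * (tauI K r Y j i b - tauPop K r Y b))
          - (2:ℝ) ^ K *
            ((tauJ K r Y j a - tauPop K r Y a) * (tauJ K r Y j b - tauPop K r Y b))) := by
    unfold SigmaMat
    simp only [Matrix.sub_apply, Matrix.smul_apply, Matrix.sum_apply, Matrix.vecMulVec_apply,
      Pi.sub_apply, smul_eq_mul]
    rw [Finset.mul_sum, ← Finset.sum_sub_distrib]
  rw [step1, Finset.mul_sum]
  refine Finset.sum_congr rfl fun j _ => ?_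
  have e1 : ∀ i : Fin (2 ^ K),
      (tauI K r Y j i a - tauPop K r Y a) * (tauI K r Y j i b - tauPop K r Y b)
        = c ^ 2 * ∑ l, ∑ m, Hmat K l a * Hmat K m b *
            ((Y j i l - YbarAll K r Y l) * (Y j i m - YbarAll K r Y m)) := by
    intro i
    rw [diffI j i a, diffI j i b, hprod]
  have e2 : (tauJ K r Y j a - tauPop K r Y a) * (tauJ K r Y j b - tauPop K r Y b)
      = c ^ 2 * ∑ l, ∑ m, Hmat K l a * Hmat K m b *
          ((YbarJ K r Y j l - YbarAll K r Y l) * (YbarJ K r Y j m - YbarAll K r Y m)) := by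
    rw [diffJ j a, diffJ j b, hprod]
  rw [Finset.sum_congr rfl fun i _ => e1 i, e2, ← Finset.mul_sum, swap3 K,
    mul_left_comm ((2:ℝ) ^ K) (c ^ 2), ← mul_sub]
  congr 1
  rw [Finset.mul_sum, ← Finset.sum_sub_distrib]
  refine Finset.sum_congr rfl fun l _ => ?_
  rw [Finset.mul_sum, ← Finset.sum_sub_distrib]
  refine Finset.sum_congr rfl fun m _ => ?_
  rw [← key_shift K r Y j l m, ← Finset.mul_sum, mul_sub]
  ring

/-- Proposition 1: the covariance matrix of the matched-pair estimator is
`Cov(τ̂_M) = (2^{2(K-1)} r²)⁻¹ ∑ₗ λₗ'λₗ Δₗ − (2^K(2^K−1) r²)⁻¹ Σ`. -/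
theorem matched_pair_covariance (hK : 0 < K) (hr : 0 < r) :
    (Matrix.of fun a b : Finset (Fin K) =>
        (Fintype.card (Fin r → Equiv.Perm (Fin (2 ^ K))) : ℝ)⁻¹ *
          ∑ π, (tauhatM K r Y π a - tauhatMMean K r Y a) *
               (tauhatM K r Y π b - tauhatMMean K r Y b))
      = ((2 : ℝ) ^ (2 * (K - 1)) * (r : ℝ) ^ 2)⁻¹ •
          (∑ l : Fin (2 ^ K),
            Delta K r Y l • vecMulVec (fun σ => Hmat K l σ) (fun σ => Hmat K l σ))
        - ((2 : ℝ) ^ K * ((2 : ℝ) ^ K - 1) * (r : ℝ) ^ 2)⁻¹ • SigmaMat K r Y := by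
  haveI := nonempty_fin_pow K
  have h2K : (2:ℝ) ^ K ≠ 0 := by positivity
  have h2K1 : (2:ℝ) ^ K - 1 ≠ 0 := by
    have : (2:ℝ) ≤ (2:ℝ) ^ K := by
      calc (2:ℝ) = 2 ^ 1 := (pow_one 2).symm
      _ ≤ 2 ^ K := by
        apply pow_le_pow_right₀ (by norm_num) hK
    linarith
  have hr0 : (r : ℝ) ≠ 0 := by exact_mod_cast hr.ne'
  have hc : ((2:ℝ) ^ (2 * (K - 1))) = (((2:ℝ) ^ (K - 1))) ^ 2 := by
    rw [mul_comm, pow_mul]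
  ext a b
  rw [Matrix.of_apply, lhs_entry K r Y a b,
    Finset.sum_congr rfl fun j _ => cov_pair K r Y hK j a b]
  simp only [Matrix.sub_apply, Matrix.smul_apply, Matrix.sum_apply, Matrix.vecMulVec_apply,
    smul_eq_mul, sigma_eq K r Y hr a b]
  have hdelta : ∑ x, Delta K r Y x * (Hmat K x a * Hmat K x b)
      = ((2:ℝ) ^ K - 1)⁻¹ * ∑ j, ∑ l, Hmat K l a * Hmat K l b * mpW K r Y j l l := by
    have h1 : ∀ l ∈ (univ : Finset (Fin (2 ^ K))),
        Delta K r Y l * (Hmat K l a * Hmat K l b)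
          = ((2:ℝ) ^ K - 1)⁻¹ * ∑ j, Hmat K l a * Hmat K l b * mpW K r Y j l l := by
      intro l _
      rw [delta_eq K r Y hK hr l, mul_assoc, Finset.sum_mul]
      congr 1
      exact Finset.sum_congr rfl fun j _ => by ring
    rw [Finset.sum_congr rfl h1, ← Finset.mul_sum, Finset.sum_comm]
  rw [hdelta, ← Finset.mul_sum, Finset.sum_sub_distrib, ← Finset.mul_sum, ← Finset.mul_sum,
    hc]
  have hd : ((2:ℝ) ^ (K - 1)) ≠ 0 := by positivity
  field_simp

end MatchedPair
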